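/- arXiv:math/0701762 — 2 statements merged into one kernel-verified Lean document; each statement's English description precedes it below -/
import Mathlib

section
/- (Miquel's four-circle theorem) Let four circles in the Euclidean plane intersect sequentially at the pairs of points (1,5), (2,7), (3,6), (4,8): i.e., circle C₁ passes through 1,5,2,7; C₂ through 2,7,3,6; C₃ through 3,6,4,8; C₄ through 4,8,1,5. If the points 1,2,3,4 are concyclic (or collinear), then the points 5,6,7,8 are concyclic (or collinear). -/
/-! Work with directed angles modulo `π`, i.e. with `2 • ∡`, for which the inscribed angle
theorem and its converse hold uniformly for circles and lines. On the first and second circles,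
`∡ 5 7 6 = ∡ 5 7 2 + ∡ 2 7 6 = ∡ 5 1 2 + ∡ 2 3 6`; on the fourth and third,
`∡ 5 8 6 = ∡ 5 8 4 + ∡ 4 8 6 = ∡ 5 1 4 + ∡ 4 3 6`. The difference of the right-hand sides is
`∡ 2 3 4 - ∡ 2 1 4`, which vanishes because `1, 2, 3, 4` are concyclic or collinear, so
`5, 6, 7, 8` are concyclic or collinear by the converse. -/

open EuclideanGeometry Module

variable {V P : Type*} [NormedAddCommGroup V] [InnerProductSpace ℝ V] [MetricSpace P]
  [NormedAddTorsor V P] [Fact (finrank ℝ V = 2)] [Oriented ℝ V (Fin 2)]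

theorem two_zsmul_oangle_eq_of_cospherical_or_collinear {s : Set P}
    (hs : Cospherical s ∨ Collinear ℝ s) {a b c d : P} (hsub : {a, b, c, d} ⊆ s)
    (hba : b ≠ a) (hbd : b ≠ d) (hca : c ≠ a) (hcd : c ≠ d) :
    (2 : ℤ) • ∡ a b d = (2 : ℤ) • ∡ a c d := by
  rcases hs with hs | hs
  · exact (hs.subset hsub).two_zsmul_oangle_eq hba hbd hca hcd
  · have hs' := hs.subset hsub
    rw [Real.Angle.two_zsmul_eq_zero_iff.2 (oangle_eq_zero_or_eq_pi_iff_collinear.2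
        (hs'.subset (by simp [Set.insert_subset_iff]))),
      Real.Angle.two_zsmul_eq_zero_iff.2 (oangle_eq_zero_or_eq_pi_iff_collinear.2
        (hs'.subset (by simp [Set.insert_subset_iff])))]

theorem two_zsmul_oangle_add {p p₁ p₂ p₃ : P} (hp₁ : p₁ ≠ p) (hp₂ : p₂ ≠ p) (hp₃ : p₃ ≠ p) :
    (2 : ℤ) • ∡ p₁ p p₂ + (2 : ℤ) • ∡ p₂ p p₃ = (2 : ℤ) • ∡ p₁ p p₃ := by
  rw [← smul_add, oangle_add hp₁ hp₂ hp₃]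

theorem miquel_four_generalized_circles {p₁ p₂ p₃ p₄ p₅ p₆ p₇ p₈ : P}
    (hinj : Function.Injective ![p₁, p₂, p₃, p₄, p₅, p₆, p₇, p₈])
    (h₁ : Cospherical {p₁, p₅, p₂, p₇} ∨ Collinear ℝ {p₁, p₅, p₂, p₇})
    (h₂ : Cospherical {p₂, p₇, p₃, p₆} ∨ Collinear ℝ {p₂, p₇, p₃, p₆})
    (h₃ : Cospherical {p₃, p₆, p₄, p₈} ∨ Collinear ℝ {p₃, p₆, p₄, p₈})
    (h₄ : Cospherical {p₄, p₈, p₁, p₅} ∨ Collinear ℝ {p₄, p₈, p₁, p₅})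
    (h : Cospherical {p₁, p₂, p₃, p₄} ∨ Collinear ℝ {p₁, p₂, p₃, p₄}) :
    Cospherical {p₅, p₆, p₇, p₈} ∨ Collinear ℝ {p₅, p₆, p₇, p₈} := by
  have ne (i j : Fin 8) (hij : i ≠ j) := hinj.ne hij
  have h₅₇ : p₅ ≠ p₇ := ne 4 6 (by decide)
  have h₂₇ : p₂ ≠ p₇ := ne 1 6 (by decide)
  have h₆₇ : p₆ ≠ p₇ := ne 5 6 (by decide)
  have h₅₈ : p₅ ≠ p₈ := ne 4 7 (by decide)
  have h₄₈ : p₄ ≠ p₈ := ne 3 7 (by decide)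
  have h₆₈ : p₆ ≠ p₈ := ne 5 7 (by decide)
  have h₅₁ : p₅ ≠ p₁ := ne 4 0 (by decide)
  have h₂₁ : p₂ ≠ p₁ := ne 1 0 (by decide)
  have h₄₁ : p₄ ≠ p₁ := ne 3 0 (by decide)
  have h₂₃ : p₂ ≠ p₃ := ne 1 2 (by decide)
  have h₄₃ : p₄ ≠ p₃ := ne 3 2 (by decide)
  have h₆₃ : p₆ ≠ p₃ := ne 5 2 (by decide)
  have inscribed₁ : (2 : ℤ) • ∡ p₅ p₇ p₂ = (2 : ℤ) • ∡ p₅ p₁ p₂ :=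
    two_zsmul_oangle_eq_of_cospherical_or_collinear h₁ (by simp [Set.insert_subset_iff])
      h₅₇.symm h₂₇.symm h₅₁.symm h₂₁.symm
  have inscribed₂ : (2 : ℤ) • ∡ p₂ p₇ p₆ = (2 : ℤ) • ∡ p₂ p₃ p₆ :=
    two_zsmul_oangle_eq_of_cospherical_or_collinear h₂ subset_rfl
      h₂₇.symm h₆₇.symm h₂₃.symm h₆₃.symm
  have inscribed₃ : (2 : ℤ) • ∡ p₄ p₈ p₆ = (2 : ℤ) • ∡ p₄ p₃ p₆ :=
    two_zsmul_oangle_eq_of_cospherical_or_collinear h₃ (by simp [Set.insert_subset_iff])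
      h₄₈.symm h₆₈.symm h₄₃.symm h₆₃.symm
  have inscribed₄ : (2 : ℤ) • ∡ p₅ p₈ p₄ = (2 : ℤ) • ∡ p₅ p₁ p₄ :=
    two_zsmul_oangle_eq_of_cospherical_or_collinear h₄ (by simp [Set.insert_subset_iff])
      h₅₈.symm h₄₈.symm h₅₁.symm h₄₁.symm
  have inscribed : (2 : ℤ) • ∡ p₂ p₁ p₄ = (2 : ℤ) • ∡ p₂ p₃ p₄ :=
    two_zsmul_oangle_eq_of_cospherical_or_collinear h (by simp [Set.insert_subset_iff])
      h₂₁.symm h₄₁.symm h₂₃.symm h₄₃.symm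
  have key : (2 : ℤ) • ∡ p₅ p₇ p₆ = (2 : ℤ) • ∡ p₅ p₈ p₆ := calc
    (2 : ℤ) • ∡ p₅ p₇ p₆ = (2 : ℤ) • ∡ p₅ p₇ p₂ + (2 : ℤ) • ∡ p₂ p₇ p₆ := by
      rw [two_zsmul_oangle_add h₅₇ h₂₇ h₆₇]
    _ = (2 : ℤ) • ∡ p₅ p₁ p₂ + ((2 : ℤ) • ∡ p₂ p₃ p₄ + (2 : ℤ) • ∡ p₄ p₃ p₆) := by
      rw [inscribed₁, inscribed₂, two_zsmul_oangle_add h₂₃ h₄₃ h₆₃]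
    _ = (2 : ℤ) • ∡ p₅ p₁ p₂ + (2 : ℤ) • ∡ p₂ p₁ p₄ + (2 : ℤ) • ∡ p₄ p₃ p₆ := by
      rw [inscribed, add_assoc]
    _ = (2 : ℤ) • ∡ p₅ p₈ p₄ + (2 : ℤ) • ∡ p₄ p₈ p₆ := by
      rw [two_zsmul_oangle_add h₅₁ h₂₁ h₄₁, inscribed₃, inscribed₄]
    _ = (2 : ℤ) • ∡ p₅ p₈ p₆ := by
      rw [two_zsmul_oangle_add h₅₈ h₄₈ h₆₈]
  have := cospherical_or_collinear_of_two_zsmul_oangle_eq key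
  rwa [Set.pair_comm p₈ p₆, Set.insert_comm p₇ p₆] at this

theorem miquel_four_circles_general
    (p1 p2 p3 p4 p5 p6 p7 p8 : EuclideanSpace ℝ (Fin 2))
    (c1 c2 c3 c4 : EuclideanSpace ℝ (Fin 2)) (r1 r2 r3 r4 : ℝ)
    (hdist : Function.Injective
      (fun i : Fin 8 => ![p1, p2, p3, p4, p5, p6, p7, p8] i))
    (h1 : {p1, p5, p2, p7} ⊆ Metric.sphere c1 r1)
    (h2 : {p2, p7, p3, p6} ⊆ Metric.sphere c2 r2)
    (h3 : {p3, p6, p4, p8} ⊆ Metric.sphere c3 r3)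
    (h4 : {p4, p8, p1, p5} ⊆ Metric.sphere c4 r4)
    (hconc : Cospherical ({p1, p2, p3, p4} : Set (EuclideanSpace ℝ (Fin 2))) ∨
      Collinear ℝ ({p1, p2, p3, p4} : Set (EuclideanSpace ℝ (Fin 2)))) :
    Cospherical ({p5, p6, p7, p8} : Set (EuclideanSpace ℝ (Fin 2))) ∨
      Collinear ℝ ({p5, p6, p7, p8} : Set (EuclideanSpace ℝ (Fin 2))) := by
  have : Fact (finrank ℝ (EuclideanSpace ℝ (Fin 2)) = 2) := ⟨finrank_euclideanSpace_fin⟩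
  have : Oriented ℝ (EuclideanSpace ℝ (Fin 2)) (Fin 2) :=
    ⟨(EuclideanSpace.basisFun (Fin 2) ℝ).toBasis.orientation⟩
  exact miquel_four_generalized_circles hdist (.inl ⟨c1, r1, h1⟩) (.inl ⟨c2, r2, h2⟩)
    (.inl ⟨c3, r3, h3⟩) (.inl ⟨c4, r4, h4⟩) hconc

/-- Miquel's four-circle theorem. Four circles `C₁,…,C₄` in the Euclidean plane
meet sequentially in the pairs of points `(1,5)`, `(2,7)`, `(3,6)`, `(4,8)`:
`C₁` passes through `1,5,2,7`; `C₂` through `2,7,3,6`; `C₃` through `3,6,4,8`;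
`C₄` through `4,8,1,5`; consecutive circles meet exactly in the indicated pair,
and the eight points are pairwise distinct. If `1,2,3,4` are concyclic or
collinear, then so are `5,6,7,8`. -/
theorem miquel_four_circles
    (p1 p2 p3 p4 p5 p6 p7 p8 : EuclideanSpace ℝ (Fin 2))
    (c1 c2 c3 c4 : EuclideanSpace ℝ (Fin 2)) (r1 r2 r3 r4 : ℝ)
    (hr1 : 0 < r1) (hr2 : 0 < r2) (hr3 : 0 < r3) (hr4 : 0 < r4)
    (hdist : Function.Injective
      (fun i : Fin 8 => ![p1, p2, p3, p4, p5, p6, p7, p8] i))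
    (h1 : {p1, p5, p2, p7} ⊆ Metric.sphere c1 r1)
    (h2 : {p2, p7, p3, p6} ⊆ Metric.sphere c2 r2)
    (h3 : {p3, p6, p4, p8} ⊆ Metric.sphere c3 r3)
    (h4 : {p4, p8, p1, p5} ⊆ Metric.sphere c4 r4)
    (h41 : Metric.sphere c4 r4 ∩ Metric.sphere c1 r1 = {p1, p5})
    (h12 : Metric.sphere c1 r1 ∩ Metric.sphere c2 r2 = {p2, p7})
    (h23 : Metric.sphere c2 r2 ∩ Metric.sphere c3 r3 = {p3, p6})
    (h34 : Metric.sphere c3 r3 ∩ Metric.sphere c4 r4 = {p4, p8})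
    (hconc : Cospherical ({p1, p2, p3, p4} : Set (EuclideanSpace ℝ (Fin 2))) ∨
      Collinear ℝ ({p1, p2, p3, p4} : Set (EuclideanSpace ℝ (Fin 2)))) :
    Cospherical ({p5, p6, p7, p8} : Set (EuclideanSpace ℝ (Fin 2))) ∨
      Collinear ℝ ({p5, p6, p7, p8} : Set (EuclideanSpace ℝ (Fin 2))) :=
  miquel_four_circles_general p1 p2 p3 p4 p5 p6 p7 p8 c1 c2 c3 c4 r1 r2 r3 r4 hdist h1 h2 h3 h4
    hconc
end

section
/- (Miquel's five-circle theorem) Let 1,2,3,4,5 be five points in the plane, and for indices mod 5 let the vertex points be defined as line intersections 1' = line(2,3)∩line(5,1), 2' = line(1,2)∩line(3,4), 3' = line(2,3)∩line(4,5), 4' = line(3,4)∩line(5,1), 5' = line(4,5)∩line(1,2) (assume all these intersections exist and are unique). Let 1'' be the second intersection of circles (1,1',2) and (5,5',1); 2'' the second intersection of circles (2,2',3) and (1,1',2); 3'' of circles (3,3',4) and (2,2',3); 4'' of circles (4,4',5) and (3,3',4); 5'' of circles (5,5',1) and (4,4',5). Then the five points 1'',2'',3'',4'',5'' are concyclic.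 -/
/-!
Any four consecutive shoulder points are concyclic; gluing four of these windows along
non-collinear triples (or noting that all points lie on a line) gives all five.

For the window `s₅, s₁, s₂, s₃`: the lines `p₁p₂, p₃p₄, p₄p₅` cut out a triangle `q₂ q₅ p₄`.
Together with `p₅p₁` (resp. `p₂p₃`) they form a complete quadrilateral whose Miquel point is `s₅`
(resp. `s₃`), so both lie on the circumcircle `Ω` of that triangle. The circumcircles
`ω₅, ω₁, ω₂` of the wedges at `p₅, p₁, p₂`, together with `Ω`, then form a closed chain whose
consecutive intersections are `p₁, p₂, q₂, q₅`, all on the line `p₁p₂`, and `s₁, s₂, s₃, s₅`;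
a chase of oriented angles modulo `π` shows that the latter are concyclic.
-/

open EuclideanGeometry Module

namespace EuclideanGeometry

variable {V P : Type*} [NormedAddCommGroup V] [InnerProductSpace ℝ V] [MetricSpace P]
  [NormedAddTorsor V P]

def CosphericalOrCollinear (s : Set P) : Prop :=
  Cospherical s ∨ Collinear ℝ s

theorem cosphericalOrCollinear_triple (a b c : P) : CosphericalOrCollinear ({a, b, c} : Set P) := by
  by_cases h : Collinear ℝ ({a, b, c} : Set P)
  · exact Or.inr h
  · let t : Affine.Triangle ℝ P := ⟨![a, b, c], affineIndependent_iff_not_collinear_set.2 h⟩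
    refine Or.inl (cospherical_iff_exists_sphere.2 ⟨t.circumsphere, ?_⟩)
    simp_rw [Set.insert_subset_iff, Set.singleton_subset_iff]
    exact ⟨t.mem_circumsphere 0, t.mem_circumsphere 1, t.mem_circumsphere 2⟩

theorem CosphericalOrCollinear.cospherical {s : Set P} (h : CosphericalOrCollinear s) {a b c : P}
    (habc : ¬Collinear ℝ ({a, b, c} : Set P)) (hs : {a, b, c} ⊆ s) : Cospherical s :=
  h.resolve_right fun hcol => habc (hcol.subset hs)

theorem _root_.Collinear.vectorSpan_pair_eq {s : Set P} (h : Collinear ℝ s) {p₁ p₂ p₃ p₄ : P}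
    (hp₁ : p₁ ∈ s) (hp₂ : p₂ ∈ s) (hp₃ : p₃ ∈ s) (hp₄ : p₄ ∈ s) (hp₁p₂ : p₁ ≠ p₂)
    (hp₃p₄ : p₃ ≠ p₄) : vectorSpan ℝ ({p₁, p₂} : Set P) = vectorSpan ℝ ({p₃, p₄} : Set P) := by
  rw [← direction_affineSpan, ← direction_affineSpan, h.affineSpan_eq_of_ne hp₁ hp₂ hp₁p₂,
    h.affineSpan_eq_of_ne hp₃ hp₄ hp₃p₄]

theorem Cospherical.not_collinear {s : Set P} (hs : Cospherical s) {p₁ p₂ p₃ : P}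
    (hp₁ : p₁ ∈ s) (hp₂ : p₂ ∈ s) (hp₃ : p₃ ∈ s) (hp₁p₂ : p₁ ≠ p₂) (hp₁p₃ : p₁ ≠ p₃)
    (hp₂p₃ : p₂ ≠ p₃) : ¬Collinear ℝ ({p₁, p₂, p₃} : Set P) :=
  affineIndependent_iff_not_collinear_set.1 <|
    hs.affineIndependent_of_mem_of_ne hp₁ hp₂ hp₃ hp₁p₂ hp₁p₃ hp₂p₃

theorem cospherical_of_mem_sphere {ω : Sphere P} {a b c d : P} (ha : a ∈ ω) (hb : b ∈ ω)
    (hc : c ∈ ω) (hd : d ∈ ω) : Cospherical ({a, b, c, d} : Set P) :=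
  cospherical_iff_exists_sphere.2 ⟨ω, Set.insert_subset_iff.2 ⟨ha, Set.insert_subset_iff.2
    ⟨hb, Set.insert_subset_iff.2 ⟨hc, Set.singleton_subset_iff.2 hd⟩⟩⟩⟩

theorem not_collinear_of_inter_eq_singleton {a b c d e x y : P}
    (hx : (line[ℝ, c, d] : Set P) ∩ line[ℝ, a, b] = {x})
    (hy : (line[ℝ, a, b] : Set P) ∩ line[ℝ, d, e] = {y})
    (hc : c ∉ line[ℝ, d, e]) (hxd : x ≠ d) : ¬Collinear ℝ ({x, y, d} : Set P) := by
  obtain ⟨⟨hxcd, hxab⟩, hxu⟩ := Set.eq_singleton_iff_unique_mem.1 hx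
  obtain ⟨⟨hyab, hyde⟩, hyu⟩ := Set.eq_singleton_iff_unique_mem.1 hy
  have hdde : d ∈ line[ℝ, d, e] := left_mem_affineSpan_pair ℝ d e
  have hyd : y ≠ d := fun h => hxd (hxu d ⟨right_mem_affineSpan_pair ℝ c d, h ▸ hyab⟩).symm
  intro hxyd
  have hxde : x ∈ line[ℝ, d, e] := affineSpan_pair_le_of_mem_of_mem hyde hdde
    (hxyd.mem_affineSpan_of_mem_of_ne (by simp) (by simp) (by simp) hyd)
  obtain rfl : x = y := hyu x ⟨hxab, hxde⟩
  exact hc (affineSpan_pair_le_of_mem_of_mem hxde hdde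
    ((collinear_insert_of_mem_affineSpan_pair hxcd).mem_affineSpan_of_mem_of_ne
      (by simp) (by simp) (by simp) hxd))

section Oriented

variable [Fact (finrank ℝ V = 2)] [Module.Oriented ℝ V (Fin 2)]

theorem two_zsmul_oangle_add_two_zsmul_oangle_of_vectorSpan_eq
    {p₁ p₂ p₃ p₄ p₅ p₆ p₇ p₈ p₉ : P}
    (h₁₂₇₈ : vectorSpan ℝ ({p₁, p₂} : Set P) = vectorSpan ℝ ({p₇, p₈} : Set P))
    (h₃₂₄₅ : vectorSpan ℝ ({p₃, p₂} : Set P) = vectorSpan ℝ ({p₄, p₅} : Set P))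
    (h₆₅₉₈ : vectorSpan ℝ ({p₆, p₅} : Set P) = vectorSpan ℝ ({p₉, p₈} : Set P))
    (hp₁p₂ : p₁ ≠ p₂) (hp₃p₂ : p₃ ≠ p₂) (hp₆p₅ : p₆ ≠ p₅) :
    (2 : ℤ) • ∡ p₁ p₂ p₃ + (2 : ℤ) • ∡ p₄ p₅ p₆ = (2 : ℤ) • ∡ p₇ p₈ p₉ := by
  have ne_of_span_eq : ∀ {x y : V}, x ≠ 0 → (ℝ ∙ x) = (ℝ ∙ y) → y ≠ 0 := by
    rintro x y hx hxy rfl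
    rw [Submodule.span_singleton_eq_bot.2 rfl, Submodule.span_singleton_eq_bot] at hxy
    exact hx hxy
  simp only [vectorSpan_pair] at h₁₂₇₈ h₃₂₄₅ h₆₅₉₈
  rw [← vsub_ne_zero] at hp₁p₂ hp₃p₂ hp₆p₅
  simp only [oangle]
  rw [o.two_zsmul_oangle_of_span_eq_of_span_eq h₁₂₇₈ h₃₂₄₅,
    o.two_zsmul_oangle_of_span_eq_of_span_eq rfl h₆₅₉₈, ← smul_add,
    o.oangle_add (ne_of_span_eq hp₁p₂ h₁₂₇₈) (ne_of_span_eq hp₃p₂ h₃₂₄₅)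
      (ne_of_span_eq hp₆p₅ h₆₅₉₈)]

end Oriented

section Plane

variable [Fact (finrank ℝ V = 2)]

attribute [local instance] FiniteDimensional.of_fact_finrank_eq_two

theorem nonempty_oriented_of_finrank_eq_two : Nonempty (Module.Oriented ℝ V (Fin 2)) :=
  ⟨⟨(finBasisOfFinrankEq ℝ V Fact.out).orientation⟩⟩

theorem Cospherical.union {s₁ s₂ : Set P} (h₁ : Cospherical s₁) (h₂ : Cospherical s₂)
    {a b c : P} (habc : ¬Collinear ℝ ({a, b, c} : Set P)) (h₁abc : {a, b, c} ⊆ s₁)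
    (h₂abc : {a, b, c} ⊆ s₂) : Cospherical (s₁ ∪ s₂) := by
  obtain ⟨ω₁, hω₁⟩ := cospherical_iff_exists_sphere.1 h₁
  obtain ⟨ω₂, hω₂⟩ := cospherical_iff_exists_sphere.1 h₂
  obtain rfl : ω₁ = ω₂ := by
    by_contra hne
    have mem : ∀ x ∈ ({a, b, c} : Set P), x ∈ ω₁ ∧ x ∈ ω₂ :=
      fun x hx => ⟨hω₁ (h₁abc hx), hω₂ (h₂abc hx)⟩
    obtain ⟨ha₁, ha₂⟩ := mem a (by simp)
    obtain ⟨hb₁, hb₂⟩ := mem b (by simp)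
    obtain ⟨hc₁, hc₂⟩ := mem c (by simp)
    rcases eq_of_mem_sphere_of_mem_sphere_of_finrank_eq_two Fact.out hne
      (ne₁₂_of_not_collinear habc) ha₁ hb₁ hc₁ ha₂ hb₂ hc₂ with h | h
    · exact ne₁₃_of_not_collinear habc h.symm
    · exact ne₂₃_of_not_collinear habc h.symm
  exact cospherical_iff_exists_sphere.2 ⟨ω₁, Set.union_subset hω₁ hω₂⟩

theorem cosphericalOrCollinear_five_of_four {a b c d e : P}
    (h₁ : CosphericalOrCollinear ({e, a, b, c} : Set P))
    (h₂ : CosphericalOrCollinear ({a, b, c, d} : Set P))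
    (h₃ : CosphericalOrCollinear ({b, c, d, e} : Set P))
    (h₄ : CosphericalOrCollinear ({d, e, a, b} : Set P)) :
    CosphericalOrCollinear ({a, b, c, d, e} : Set P) := by
  rcases eq_or_ne a b with rfl | hab
  · simpa using h₃
  have glue : ∀ {w : P} {s₁ s₂ : Set P}, w ∉ line[ℝ, a, b] → CosphericalOrCollinear s₁ →
      CosphericalOrCollinear s₂ → {a, b, w} ⊆ s₁ → {a, b, w} ⊆ s₂ → s₁ ∪ s₂ = {a, b, c, d, e} →
      CosphericalOrCollinear ({a, b, c, d, e} : Set P) := by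
    intro w s₁ s₂ hw h₁ h₂ hs₁ hs₂ hs
    have habw : ¬Collinear ℝ ({a, b, w} : Set P) := fun h =>
      hw (h.mem_affineSpan_of_mem_of_ne (by simp) (by simp) (by simp) hab)
    exact Or.inl (hs ▸ (h₁.cospherical habw hs₁).union (h₂.cospherical habw hs₂) habw hs₁ hs₂)
  by_cases hc : c ∈ line[ℝ, a, b]
  · by_cases hd : d ∈ line[ℝ, a, b]
    · by_cases he : e ∈ line[ℝ, a, b]
      · right
        exact (collinear_insert_insert_insert_of_mem_affineSpan_pair hc hd he).subset
          (by simp [Set.insert_subset_iff])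
      · exact glue he h₁ h₄ (by simp [Set.insert_subset_iff]) (by simp [Set.insert_subset_iff])
          (by ext; simp; tauto)
    · exact glue hd h₂ h₄ (by simp [Set.insert_subset_iff]) (by simp [Set.insert_subset_iff])
        (by ext; simp; tauto)
  · exact glue hc h₂ h₁ (by simp [Set.insert_subset_iff]) (by simp) (by ext; simp; tauto)

/-- `pxy` is the common point of the lines `x` and `y` of a complete quadrilateral `A, B, C, D`,
and `m` the second common point of the circumcircles of the triangles `ABC` and `BCD`. -/
theorem cospherical_miquel_quadrilateral {pab pac pad pbc pbd pcd m : P}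
    (hA : Collinear ℝ ({pab, pac, pad} : Set P)) (hB : Collinear ℝ ({pab, pbc, pbd} : Set P))
    (hC : Collinear ℝ ({pac, pbc, pcd} : Set P)) (hD : Collinear ℝ ({pad, pbd, pcd} : Set P))
    (hABC : ¬Collinear ℝ ({pab, pac, pbc} : Set P))
    (hBCD : ¬Collinear ℝ ({pbc, pbd, pcd} : Set P))
    (hABD : ¬Collinear ℝ ({pab, pad, pbd} : Set P))
    (h₁ : Cospherical ({pab, pac, pbc, m} : Set P)) (h₂ : Cospherical ({pbc, pbd, pcd, m} : Set P))
    (hm : m ≠ pbc) : Cospherical ({pab, pad, m, pbd} : Set P) := by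
  obtain ⟨_⟩ := nonempty_oriented_of_finrank_eq_two (V := V)
  have hab_ac := ne₁₂_of_not_collinear hABC
  have hab_bc := ne₁₃_of_not_collinear hABC
  have hac_bc := ne₂₃_of_not_collinear hABC
  have hbc_bd := ne₁₂_of_not_collinear hBCD
  have hbc_cd := ne₁₃_of_not_collinear hBCD
  have hbd_cd := ne₂₃_of_not_collinear hBCD
  have hab_ad := ne₁₂_of_not_collinear hABD
  have hab_bd := ne₁₃_of_not_collinear hABD
  have had_bd := ne₂₃_of_not_collinear hABD
  -- otherwise one of the two circles would meet the line `B` in three points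
  have hm_ab : m ≠ pab := by
    rintro rfl
    exact h₂.not_collinear (by simp) (by simp) (by simp) hab_bc hab_bd hbc_bd hB
  have hm_bd : m ≠ pbd := by
    rintro rfl
    exact h₁.not_collinear (by simp) (by simp) (by simp) hab_bc hab_bd hbc_bd hB
  refine cospherical_of_two_zsmul_oangle_eq_of_not_collinear ?_ hABD
  calc (2 : ℤ) • ∡ pab pad pbd
      = (2 : ℤ) • ∡ pab pac pbc + (2 : ℤ) • ∡ pbc pcd pbd :=
        (two_zsmul_oangle_add_two_zsmul_oangle_of_vectorSpan_eq
          (hA.vectorSpan_pair_eq (by simp) (by simp) (by simp) (by simp) hab_ac hab_ad)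
          (hC.vectorSpan_pair_eq (by simp) (by simp) (by simp) (by simp) hac_bc.symm hbc_cd)
          (hD.vectorSpan_pair_eq (by simp) (by simp) (by simp) (by simp) hbd_cd had_bd.symm)
          hab_ac hac_bc.symm hbd_cd).symm
    _ = (2 : ℤ) • ∡ pab m pbc + (2 : ℤ) • ∡ pbc m pbd := by
        rw [(h₁.subset (by simp [Set.insert_subset_iff]) :
              Cospherical ({pab, m, pac, pbc} : Set P)).two_zsmul_oangle_eq hm_ab hm hab_ac.symm
              hac_bc,
            (h₂.subset (by simp [Set.insert_subset_iff]) :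
              Cospherical ({pbc, m, pcd, pbd} : Set P)).two_zsmul_oangle_eq hm hm_bd hbc_cd.symm
              hbd_cd.symm]
    _ = (2 : ℤ) • ∡ pab m pbd := by rw [← smul_add, oangle_add hm_ab.symm hm.symm hm_bd.symm]

/-- Miquel's six-circle theorem, in the case where the four points `xᵢ` lie on a line. -/
theorem cosphericalOrCollinear_of_chain {x₁ x₂ x₃ x₄ y₁ y₂ y₃ y₄ : P}
    (hx₁ : x₁ ∈ line[ℝ, x₂, x₃]) (hx₄ : x₄ ∈ line[ℝ, x₂, x₃])
    (h₁ : Cospherical ({x₁, x₂, y₄, y₁} : Set P)) (h₂ : Cospherical ({x₂, x₃, y₁, y₂} : Set P))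
    (h₃ : Cospherical ({x₃, x₄, y₂, y₃} : Set P)) (h₄ : Cospherical ({x₄, x₁, y₃, y₄} : Set P))
    (hx₁x₂ : x₁ ≠ x₂) (hx₂x₃ : x₂ ≠ x₃) (hx₃x₄ : x₃ ≠ x₄) (hx₄x₁ : x₄ ≠ x₁)
    (hy₁ : y₁ ≠ x₂) (hy₂ : y₂ ≠ x₃) (hy₃ : y₃ ≠ x₄) (hy₄ : y₄ ≠ x₁) :
    CosphericalOrCollinear ({y₄, y₁, y₂, y₃} : Set P) := by
  obtain ⟨_⟩ := nonempty_oriented_of_finrank_eq_two (V := V)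
  rcases eq_or_ne y₁ y₄ with rfl | hy₁y₄
  · simpa using cosphericalOrCollinear_triple y₁ y₂ y₃
  rcases eq_or_ne y₁ y₂ with rfl | hy₁y₂
  · simpa using cosphericalOrCollinear_triple y₄ y₁ y₃
  rcases eq_or_ne y₃ y₄ with rfl | hy₃y₄
  · simpa [Set.insert_comm] using cosphericalOrCollinear_triple y₁ y₂ y₃
  rcases eq_or_ne y₃ y₂ with rfl | hy₃y₂
  · simpa using cosphericalOrCollinear_triple y₄ y₁ y₃
  have hx₂₁₄ : Collinear ℝ ({x₂, x₁, x₄} : Set P) :=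
    collinear_triple_of_mem_affineSpan_pair (left_mem_affineSpan_pair ℝ x₂ x₃) hx₁ hx₄
  have hx₂₃₄ : Collinear ℝ ({x₂, x₃, x₄} : Set P) :=
    collinear_triple_of_mem_affineSpan_pair (left_mem_affineSpan_pair ℝ x₂ x₃)
      (right_mem_affineSpan_pair ℝ x₂ x₃) hx₄
  have key : (2 : ℤ) • ∡ y₄ y₁ y₂ = (2 : ℤ) • ∡ y₄ y₃ y₂ := by
    calc (2 : ℤ) • ∡ y₄ y₁ y₂ = (2 : ℤ) • ∡ y₄ y₁ x₂ + (2 : ℤ) • ∡ x₂ y₁ y₂ := by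
          rw [← smul_add, oangle_add hy₁y₄.symm hy₁.symm hy₁y₂.symm]
      _ = (2 : ℤ) • ∡ y₄ x₁ x₂ + (2 : ℤ) • ∡ x₂ x₃ y₂ := by
          rw [(h₁.subset (by simp [Set.insert_subset_iff]) :
                Cospherical ({y₄, y₁, x₁, x₂} : Set P)).two_zsmul_oangle_eq hy₁y₄ hy₁ hy₄.symm
                hx₁x₂,
              (h₂.subset (by simp [Set.insert_subset_iff]) :
                Cospherical ({x₂, y₁, x₃, y₂} : Set P)).two_zsmul_oangle_eq hy₁ hy₁y₂
                hx₂x₃.symm hy₂.symm]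
      _ = (2 : ℤ) • ∡ y₄ x₁ x₄ + (2 : ℤ) • ∡ x₄ x₃ y₂ := by
          rw [hx₂₁₄.two_zsmul_oangle_eq_right hx₁x₂.symm hx₄x₁,
            hx₂₃₄.two_zsmul_oangle_eq_left hx₂x₃ hx₃x₄.symm]
      _ = (2 : ℤ) • ∡ y₄ y₃ x₄ + (2 : ℤ) • ∡ x₄ y₃ y₂ := by
          rw [(h₄.subset (by simp [Set.insert_subset_iff]) :
                Cospherical ({y₄, y₃, x₁, x₄} : Set P)).two_zsmul_oangle_eq hy₃y₄ hy₃ hy₄.symm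
                hx₄x₁.symm,
              (h₃.subset (by simp [Set.insert_subset_iff]) :
                Cospherical ({x₄, y₃, x₃, y₂} : Set P)).two_zsmul_oangle_eq hy₃ hy₃y₂
                hx₃x₄ hy₂.symm]
      _ = (2 : ℤ) • ∡ y₄ y₃ y₂ := by
          rw [← smul_add, oangle_add hy₃y₄.symm hy₃.symm hy₃y₂.symm]
  have h := cospherical_or_collinear_of_two_zsmul_oangle_eq key
  rwa [Set.pair_comm y₃ y₂] at h

theorem cospherical_vertices_shoulders {p₁ p₂ p₃ p₄ p₅ q₂ q₃ q₄ q₅ s₃ s₅ : P}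
    (hq₂L₁ : q₂ ∈ line[ℝ, p₁, p₂]) (hq₂L₃ : q₂ ∈ line[ℝ, p₃, p₄])
    (hq₃L₂ : q₃ ∈ line[ℝ, p₂, p₃]) (hq₃L₄ : q₃ ∈ line[ℝ, p₄, p₅])
    (hq₄L₃ : q₄ ∈ line[ℝ, p₃, p₄]) (hq₄L₅ : q₄ ∈ line[ℝ, p₅, p₁])
    (hq₅L₁ : q₅ ∈ line[ℝ, p₁, p₂]) (hq₅L₄ : q₅ ∈ line[ℝ, p₄, p₅])
    (hnc₂ : ¬Collinear ℝ ({p₂, q₂, p₃} : Set P)) (hnc₃ : ¬Collinear ℝ ({p₃, q₃, p₄} : Set P))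
    (hnc₄ : ¬Collinear ℝ ({p₄, q₄, p₅} : Set P)) (hnc₅ : ¬Collinear ℝ ({p₅, q₅, p₁} : Set P))
    (hT : ¬Collinear ℝ ({q₂, q₅, p₄} : Set P))
    (h₂ : Cospherical ({p₂, q₂, p₃, s₃} : Set P)) (h₃ : Cospherical ({p₃, q₃, p₄, s₃} : Set P))
    (h₄ : Cospherical ({p₄, q₄, p₅, s₅} : Set P)) (h₅ : Cospherical ({p₅, q₅, p₁, s₅} : Set P))
    (hs₃p₃ : s₃ ≠ p₃) (hs₅p₅ : s₅ ≠ p₅) :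
    Cospherical ({q₂, q₅, s₃, s₅} : Set P) := by
  have hp₄L₃ : p₄ ∈ line[ℝ, p₃, p₄] := right_mem_affineSpan_pair ℝ p₃ p₄
  have hp₄L₄ : p₄ ∈ line[ℝ, p₄, p₅] := left_mem_affineSpan_pair ℝ p₄ p₅
  -- `s₅` is the Miquel point of `p₁p₂, p₄p₅, p₅p₁, p₃p₄`, and `s₃` that of `p₁p₂, p₃p₄, p₂p₃, p₄p₅`
  have hΩ₅ : Cospherical ({q₅, q₂, s₅, p₄} : Set P) :=
    cospherical_miquel_quadrilateral
      (collinear_triple_of_mem_affineSpan_pair hq₅L₁ (left_mem_affineSpan_pair ℝ _ _) hq₂L₁)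
      (collinear_triple_of_mem_affineSpan_pair hq₅L₄ (right_mem_affineSpan_pair ℝ _ _) hp₄L₄)
      (collinear_triple_of_mem_affineSpan_pair (right_mem_affineSpan_pair ℝ _ _)
        (left_mem_affineSpan_pair ℝ _ _) hq₄L₅)
      (collinear_triple_of_mem_affineSpan_pair hq₂L₃ hp₄L₃ hq₄L₃)
      (fun h => hnc₅ (h.subset (by simp [Set.insert_subset_iff])))
      (fun h => hnc₄ (h.subset (by simp [Set.insert_subset_iff])))
      (by rwa [Set.insert_comm])
      (h₅.subset (by simp [Set.insert_subset_iff])) (h₄.subset (by simp [Set.insert_subset_iff]))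
      hs₅p₅
  have hΩ₃ : Cospherical ({q₂, q₅, s₃, p₄} : Set P) :=
    cospherical_miquel_quadrilateral
      (collinear_triple_of_mem_affineSpan_pair hq₂L₁ (right_mem_affineSpan_pair ℝ _ _) hq₅L₁)
      (collinear_triple_of_mem_affineSpan_pair hq₂L₃ (left_mem_affineSpan_pair ℝ _ _) hp₄L₃)
      (collinear_triple_of_mem_affineSpan_pair (left_mem_affineSpan_pair ℝ _ _)
        (right_mem_affineSpan_pair ℝ _ _) hq₃L₂)
      (collinear_triple_of_mem_affineSpan_pair hq₅L₄ hp₄L₄ hq₃L₄)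
      (fun h => hnc₂ (h.subset (by simp [Set.insert_subset_iff])))
      (fun h => hnc₃ (h.subset (by simp [Set.insert_subset_iff]))) hT
      (h₂.subset (by simp [Set.insert_subset_iff])) (h₃.subset (by simp [Set.insert_subset_iff]))
      hs₃p₃
  exact (hΩ₅.union hΩ₃ hT (by simp [Set.insert_subset_iff]) (by simp [Set.insert_subset_iff])).subset
    (by simp [Set.insert_subset_iff])

theorem cosphericalOrCollinear_four_shoulders {p₁ p₂ p₃ p₄ p₅ q₂ q₃ q₄ q₅ s₁ s₂ s₃ s₅ : P}
    {ω₁ ω₂ ω₃ ω₄ ω₅ : Sphere P}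
    (hq₂ : (line[ℝ, p₃, p₄] : Set P) ∩ line[ℝ, p₁, p₂] = {q₂})
    (hq₃ : (line[ℝ, p₄, p₅] : Set P) ∩ line[ℝ, p₂, p₃] = {q₃})
    (hq₄ : (line[ℝ, p₅, p₁] : Set P) ∩ line[ℝ, p₃, p₄] = {q₄})
    (hq₅ : (line[ℝ, p₁, p₂] : Set P) ∩ line[ℝ, p₄, p₅] = {q₅})
    (hp₁p₂ : p₁ ≠ p₂) (hnc₂ : ¬Collinear ℝ ({p₂, q₂, p₃} : Set P))
    (hnc₃ : ¬Collinear ℝ ({p₃, q₃, p₄} : Set P)) (hnc₄ : ¬Collinear ℝ ({p₄, q₄, p₅} : Set P))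
    (hnc₅ : ¬Collinear ℝ ({p₅, q₅, p₁} : Set P))
    (hω₁ : {p₁, p₂} ⊆ (ω₁ : Set P)) (hω₂ : {p₂, q₂, p₃} ⊆ (ω₂ : Set P))
    (hω₃ : {p₃, q₃, p₄} ⊆ (ω₃ : Set P)) (hω₄ : {p₄, q₄, p₅} ⊆ (ω₄ : Set P))
    (hω₅ : {p₅, q₅, p₁} ⊆ (ω₅ : Set P)) (hω₃₂ : ω₃ ≠ ω₂) (hω₅₄ : ω₅ ≠ ω₄)
    (hs₁ : s₁ ∈ (ω₁ : Set P) ∩ ω₅) (hs₂ : s₂ ∈ (ω₂ : Set P) ∩ ω₁)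
    (hs₃ : s₃ ∈ (ω₃ : Set P) ∩ ω₂) (hs₅ : s₅ ∈ (ω₅ : Set P) ∩ ω₄)
    (hs₁p₁ : s₁ ≠ p₁) (hs₂p₂ : s₂ ≠ p₂) (hs₃p₃ : s₃ ≠ p₃) (hs₅p₅ : s₅ ≠ p₅) :
    CosphericalOrCollinear ({s₅, s₁, s₂, s₃} : Set P) := by
  simp only [Set.insert_subset_iff, Set.singleton_subset_iff, Set.mem_inter_iff,
    Sphere.mem_coe] at hω₁ hω₂ hω₃ hω₄ hω₅ hs₁ hs₂ hs₃ hs₅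
  obtain ⟨⟨hq₂L₃, hq₂L₁⟩, -⟩ := Set.eq_singleton_iff_unique_mem.1 hq₂
  obtain ⟨⟨hq₃L₄, hq₃L₂⟩, -⟩ := Set.eq_singleton_iff_unique_mem.1 hq₃
  obtain ⟨⟨hq₄L₅, hq₄L₃⟩, -⟩ := Set.eq_singleton_iff_unique_mem.1 hq₄
  obtain ⟨⟨hq₅L₁, hq₅L₄⟩, hq₅u⟩ := Set.eq_singleton_iff_unique_mem.1 hq₅
  rcases eq_or_ne s₃ s₅ with rfl | hs₃s₅
  · simpa using cosphericalOrCollinear_triple s₁ s₂ s₃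
  -- if `p₄` were on `p₁p₂`, it would be `q₂ = q₅`, hence the second intersection of both
  -- `ω₂, ω₃` and `ω₄, ω₅`, forcing `s₃ = p₄ = s₅`
  have hq₂p₄ : q₂ ≠ p₄ := by
    rintro rfl
    obtain rfl : q₂ = q₅ := hq₅u q₂ ⟨hq₂L₁, left_mem_affineSpan_pair ℝ _ _⟩
    have h₃ := eq_of_mem_sphere_of_mem_sphere_of_finrank_eq_two Fact.out hω₃₂ hs₃p₃.symm hω₃.1
      hs₃.1 hω₃.2.2 hω₂.2.2 hs₃.2 hω₂.2.1
    have h₅ := eq_of_mem_sphere_of_mem_sphere_of_finrank_eq_two Fact.out hω₅₄ hs₅p₅.symm hω₅.1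
      hs₅.1 hω₅.2.1 hω₄.2.2 hs₅.2 hω₄.1
    exact hs₃s₅ ((h₃.resolve_left (ne₁₃_of_not_collinear hnc₃).symm).symm.trans
      (h₅.resolve_left (ne₁₃_of_not_collinear hnc₄)))
  have hT : ¬Collinear ℝ ({q₂, q₅, p₄} : Set P) :=
    not_collinear_of_inter_eq_singleton hq₂ hq₅
      (fun h => hnc₃ (collinear_triple_of_mem_affineSpan_pair h hq₃L₄
        (left_mem_affineSpan_pair ℝ _ _))) hq₂p₄
  have hs₅q₅ : s₅ ≠ q₅ := fun h => ω₄.cospherical.not_collinear (h ▸ hs₅.2) hω₄.1 hω₄.2.2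
    (ne₂₃_of_not_collinear hT) (ne₁₂_of_not_collinear hnc₅).symm (ne₁₃_of_not_collinear hnc₄)
    (collinear_insert_of_mem_affineSpan_pair hq₅L₄)
  have hs₃q₂ : s₃ ≠ q₂ := fun h => ω₃.cospherical.not_collinear (h ▸ hs₃.1) hω₃.1 hω₃.2.2
    (ne₂₃_of_not_collinear hnc₂) hq₂p₄ (ne₁₃_of_not_collinear hnc₃)
    (collinear_insert_of_mem_affineSpan_pair hq₂L₃)
  have hΩ := cospherical_vertices_shoulders hq₂L₁ hq₂L₃ hq₃L₂ hq₃L₄ hq₄L₃ hq₄L₅ hq₅L₁ hq₅L₄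
    hnc₂ hnc₃ hnc₄ hnc₅ hT (cospherical_of_mem_sphere hω₂.1 hω₂.2.1 hω₂.2.2 hs₃.2)
    (cospherical_of_mem_sphere hω₃.1 hω₃.2.1 hω₃.2.2 hs₃.1)
    (cospherical_of_mem_sphere hω₄.1 hω₄.2.1 hω₄.2.2 hs₅.2)
    (cospherical_of_mem_sphere hω₅.1 hω₅.2.1 hω₅.2.2 hs₅.1) hs₃p₃ hs₅p₅
  exact cosphericalOrCollinear_of_chain hq₅L₁ hq₂L₁
    (cospherical_of_mem_sphere hω₅.2.1 hω₅.2.2 hs₅.1 hs₁.2)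
    (cospherical_of_mem_sphere hω₁.1 hω₁.2 hs₁.1 hs₂.2)
    (cospherical_of_mem_sphere hω₂.1 hω₂.2.1 hs₂.1 hs₃.2) hΩ
    (ne₂₃_of_not_collinear hnc₅) hp₁p₂ (ne₁₂_of_not_collinear hnc₂) (ne₁₂_of_not_collinear hT)
    hs₁p₁ hs₂p₂ hs₃q₂ hs₅q₅

theorem cosphericalOrCollinear_four_shoulders_fin_five (p q s c : Fin 5 → P) (r : Fin 5 → ℝ)
    (hq : ∀ i, (line[ℝ, p (i + 1), p (i + 2)] : Set P) ∩ line[ℝ, p (i - 1), p i] = {q i})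
    (hnc : ∀ i, ¬Collinear ℝ ({p i, q i, p (i + 1)} : Set P))
    (hC : ∀ i, {p i, q i, p (i + 1)} ⊆ Metric.sphere (c i) (r i))
    (hd : ∀ i, Metric.sphere (c i) (r i) ≠ Metric.sphere (c (i - 1)) (r (i - 1)))
    (hs : ∀ i, s i ∈ Metric.sphere (c i) (r i) ∩ Metric.sphere (c (i - 1)) (r (i - 1)))
    (hs' : ∀ i, s i ≠ p i) (k : Fin 5) :
    CosphericalOrCollinear ({s (k - 1), s k, s (k + 1), s (k + 2)} : Set P) := by
  have hk : k - 1 = k + 4 := by rw [sub_eq_add_neg]; rfl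
  let ω : Fin 5 → Sphere P := fun i => ⟨c i, r i⟩
  have hω : ∀ i, ω i ≠ ω (i - 1) := fun i => ne_of_apply_ne (fun ω : Sphere P => (ω : Set P)) (hd i)
  rw [hk]
  exact cosphericalOrCollinear_four_shoulders (p₅ := p (k + 4)) (q₂ := q (k + 1))
    (q₃ := q (k + 2)) (q₄ := q (k + 3)) (q₅ := q (k + 4)) (ω₁ := ω k) (ω₂ := ω (k + 1)) (ω₃ := ω (k + 2))
    (ω₄ := ω (k + 3)) (ω₅ := ω (k + 4))
    (by simpa [add_assoc] using hq (k + 1)) (by simpa [add_assoc, add_sub_assoc] using hq (k + 2))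
    (by simpa [add_assoc, add_sub_assoc] using hq (k + 3))
    (by simpa [add_assoc, add_sub_assoc] using hq (k + 4))
    (ne₁₃_of_not_collinear (hnc k)) (by simpa [add_assoc] using hnc (k + 1))
    (by simpa [add_assoc] using hnc (k + 2)) (by simpa [add_assoc] using hnc (k + 3))
    (by simpa [add_assoc] using hnc (k + 4))
    (Set.insert_subset_insert (Set.subset_insert _ _) |>.trans (hC k))
    (by simpa [add_assoc] using hC (k + 1)) (by simpa [add_assoc] using hC (k + 2))
    (by simpa [add_assoc] using hC (k + 3)) (by simpa [add_assoc] using hC (k + 4))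
    (by simpa [add_sub_assoc] using hω (k + 2)) (by simpa [add_sub_assoc] using hω (k + 4))
    (by simpa [ω, hk] using hs k) (by simpa [ω] using hs (k + 1))
    (by simpa [ω, add_sub_assoc] using hs (k + 2)) (by simpa [ω, add_sub_assoc] using hs (k + 4))
    (hs' k) (hs' (k + 1)) (hs' (k + 2)) (hs' (k + 4))

end Plane

end EuclideanGeometry

theorem miquel_five_circles_general
    (p1 p2 p3 p4 p5 q1 q2 q3 q4 q5 s1 s2 s3 s4 s5 : EuclideanSpace ℝ (Fin 2))
    -- the vertices are the unique intersection points of the corresponding lines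
    (hq1 : (affineSpan ℝ {p2, p3} : Set (EuclideanSpace ℝ (Fin 2))) ∩
      affineSpan ℝ {p5, p1} = {q1})
    (hq2 : (affineSpan ℝ {p1, p2} : Set (EuclideanSpace ℝ (Fin 2))) ∩
      affineSpan ℝ {p3, p4} = {q2})
    (hq3 : (affineSpan ℝ {p2, p3} : Set (EuclideanSpace ℝ (Fin 2))) ∩
      affineSpan ℝ {p4, p5} = {q3})
    (hq4 : (affineSpan ℝ {p3, p4} : Set (EuclideanSpace ℝ (Fin 2))) ∩
      affineSpan ℝ {p5, p1} = {q4})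
    (hq5 : (affineSpan ℝ {p4, p5} : Set (EuclideanSpace ℝ (Fin 2))) ∩
      affineSpan ℝ {p1, p2} = {q5})
    -- the triples defining the circumcircles are non-collinear
    (hnc1 : ¬ Collinear ℝ ({p1, q1, p2} : Set (EuclideanSpace ℝ (Fin 2))))
    (hnc2 : ¬ Collinear ℝ ({p2, q2, p3} : Set (EuclideanSpace ℝ (Fin 2))))
    (hnc3 : ¬ Collinear ℝ ({p3, q3, p4} : Set (EuclideanSpace ℝ (Fin 2))))
    (hnc4 : ¬ Collinear ℝ ({p4, q4, p5} : Set (EuclideanSpace ℝ (Fin 2))))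
    (hnc5 : ¬ Collinear ℝ ({p5, q5, p1} : Set (EuclideanSpace ℝ (Fin 2))))
    -- the five circumcircles
    (c1 c2 c3 c4 c5 : EuclideanSpace ℝ (Fin 2)) (r1 r2 r3 r4 r5 : ℝ)
    (hC1 : {p1, q1, p2} ⊆ Metric.sphere c1 r1)
    (hC2 : {p2, q2, p3} ⊆ Metric.sphere c2 r2)
    (hC3 : {p3, q3, p4} ⊆ Metric.sphere c3 r3)
    (hC4 : {p4, q4, p5} ⊆ Metric.sphere c4 r4)
    (hC5 : {p5, q5, p1} ⊆ Metric.sphere c5 r5)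
    -- neighboring circumcircles are distinct
    (hd1 : Metric.sphere c1 r1 ≠ Metric.sphere c5 r5)
    (hd2 : Metric.sphere c2 r2 ≠ Metric.sphere c1 r1)
    (hd3 : Metric.sphere c3 r3 ≠ Metric.sphere c2 r2)
    (hd4 : Metric.sphere c4 r4 ≠ Metric.sphere c3 r3)
    (hd5 : Metric.sphere c5 r5 ≠ Metric.sphere c4 r4)
    -- the shoulder points: second intersections of neighboring circumcircles
    (hs1 : s1 ∈ Metric.sphere c1 r1 ∩ Metric.sphere c5 r5) (hs1' : s1 ≠ p1)
    (hs2 : s2 ∈ Metric.sphere c2 r2 ∩ Metric.sphere c1 r1) (hs2' : s2 ≠ p2)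
    (hs3 : s3 ∈ Metric.sphere c3 r3 ∩ Metric.sphere c2 r2) (hs3' : s3 ≠ p3)
    (hs4 : s4 ∈ Metric.sphere c4 r4 ∩ Metric.sphere c3 r3) (hs4' : s4 ≠ p4)
    (hs5 : s5 ∈ Metric.sphere c5 r5 ∩ Metric.sphere c4 r4) (hs5' : s5 ≠ p5) :
    Cospherical ({s1, s2, s3, s4, s5} : Set (EuclideanSpace ℝ (Fin 2))) ∨
      Collinear ℝ ({s1, s2, s3, s4, s5} : Set (EuclideanSpace ℝ (Fin 2))) := by
  have : Fact (finrank ℝ (EuclideanSpace ℝ (Fin 2)) = 2) := ⟨finrank_euclideanSpace_fin⟩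
  have h := cosphericalOrCollinear_four_shoulders_fin_five ![p1, p2, p3, p4, p5]
    ![q1, q2, q3, q4, q5] ![s1, s2, s3, s4, s5] ![c1, c2, c3, c4, c5] ![r1, r2, r3, r4, r5]
    (by intro i; fin_cases i <;> simp <;> first | assumption | rwa [Set.inter_comm])
    (by intro i; fin_cases i <;> simpa)
    (by intro i; fin_cases i <;> simpa)
    (by intro i; fin_cases i <;> simpa)
    (by intro i; fin_cases i <;> simpa)
    (by intro i; fin_cases i <;> simpa)
  exact cosphericalOrCollinear_five_of_four (by simpa using h 0) (by simpa using h 1)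
    (by simpa using h 2) (by simpa using h 4)

/-- Miquel's five-circle theorem. Given five points `p1,…,p5` of the plane,
the vertex points `q1,…,q5` are the (unique) intersections of the indicated
pairs of lines, and the five circumcircles of the wedges `(pᵢ, qᵢ, pᵢ₊₁)` meet
sequentially in the shoulder points `s1,…,s5` (the second intersection points,
distinct from the common armpit points).  Then the five shoulder points lie on
a common circle or line. -/
theorem miquel_five_circles
    (p1 p2 p3 p4 p5 q1 q2 q3 q4 q5 s1 s2 s3 s4 s5 : EuclideanSpace ℝ (Fin 2))
    -- the vertices are the unique intersection points of the corresponding lines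
    (hq1 : (affineSpan ℝ {p2, p3} : Set (EuclideanSpace ℝ (Fin 2))) ∩
      affineSpan ℝ {p5, p1} = {q1})
    (hq2 : (affineSpan ℝ {p1, p2} : Set (EuclideanSpace ℝ (Fin 2))) ∩
      affineSpan ℝ {p3, p4} = {q2})
    (hq3 : (affineSpan ℝ {p2, p3} : Set (EuclideanSpace ℝ (Fin 2))) ∩
      affineSpan ℝ {p4, p5} = {q3})
    (hq4 : (affineSpan ℝ {p3, p4} : Set (EuclideanSpace ℝ (Fin 2))) ∩
      affineSpan ℝ {p5, p1} = {q4})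
    (hq5 : (affineSpan ℝ {p4, p5} : Set (EuclideanSpace ℝ (Fin 2))) ∩
      affineSpan ℝ {p1, p2} = {q5})
    -- the triples defining the circumcircles are non-collinear
    (hnc1 : ¬ Collinear ℝ ({p1, q1, p2} : Set (EuclideanSpace ℝ (Fin 2))))
    (hnc2 : ¬ Collinear ℝ ({p2, q2, p3} : Set (EuclideanSpace ℝ (Fin 2))))
    (hnc3 : ¬ Collinear ℝ ({p3, q3, p4} : Set (EuclideanSpace ℝ (Fin 2))))
    (hnc4 : ¬ Collinear ℝ ({p4, q4, p5} : Set (EuclideanSpace ℝ (Fin 2))))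
    (hnc5 : ¬ Collinear ℝ ({p5, q5, p1} : Set (EuclideanSpace ℝ (Fin 2))))
    -- the five circumcircles
    (c1 c2 c3 c4 c5 : EuclideanSpace ℝ (Fin 2)) (r1 r2 r3 r4 r5 : ℝ)
    (hr1 : 0 < r1) (hr2 : 0 < r2) (hr3 : 0 < r3) (hr4 : 0 < r4) (hr5 : 0 < r5)
    (hC1 : {p1, q1, p2} ⊆ Metric.sphere c1 r1)
    (hC2 : {p2, q2, p3} ⊆ Metric.sphere c2 r2)
    (hC3 : {p3, q3, p4} ⊆ Metric.sphere c3 r3)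
    (hC4 : {p4, q4, p5} ⊆ Metric.sphere c4 r4)
    (hC5 : {p5, q5, p1} ⊆ Metric.sphere c5 r5)
    -- neighboring circumcircles are distinct
    (hd1 : Metric.sphere c1 r1 ≠ Metric.sphere c5 r5)
    (hd2 : Metric.sphere c2 r2 ≠ Metric.sphere c1 r1)
    (hd3 : Metric.sphere c3 r3 ≠ Metric.sphere c2 r2)
    (hd4 : Metric.sphere c4 r4 ≠ Metric.sphere c3 r3)
    (hd5 : Metric.sphere c5 r5 ≠ Metric.sphere c4 r4)
    -- the shoulder points: second intersections of neighboring circumcircles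
    (hs1 : s1 ∈ Metric.sphere c1 r1 ∩ Metric.sphere c5 r5) (hs1' : s1 ≠ p1)
    (hs2 : s2 ∈ Metric.sphere c2 r2 ∩ Metric.sphere c1 r1) (hs2' : s2 ≠ p2)
    (hs3 : s3 ∈ Metric.sphere c3 r3 ∩ Metric.sphere c2 r2) (hs3' : s3 ≠ p3)
    (hs4 : s4 ∈ Metric.sphere c4 r4 ∩ Metric.sphere c3 r3) (hs4' : s4 ≠ p4)
    (hs5 : s5 ∈ Metric.sphere c5 r5 ∩ Metric.sphere c4 r4) (hs5' : s5 ≠ p5) :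
    Cospherical ({s1, s2, s3, s4, s5} : Set (EuclideanSpace ℝ (Fin 2))) ∨
      Collinear ℝ ({s1, s2, s3, s4, s5} : Set (EuclideanSpace ℝ (Fin 2))) :=
  miquel_five_circles_general p1 p2 p3 p4 p5 q1 q2 q3 q4 q5 s1 s2 s3 s4 s5 hq1 hq2 hq3 hq4 hq5 hnc1
    hnc2 hnc3 hnc4 hnc5 c1 c2 c3 c4 c5 r1 r2 r3 r4 r5 hC1 hC2 hC3 hC4 hC5 hd1 hd2 hd3 hd4 hd5 hs1
    hs1' hs2 hs2' hs3 hs3' hs4 hs4' hs5 hs5'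
end
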